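/- With the setup of the constrained Fermat-Weber problem, a point x̄ ∈ C \ {a₁,...,aₘ} is the optimal solution if and only if ⟨T(x̄) - x̄, x - x̄⟩ ≤ 0 for all x ∈ C, where T is the Weiszfeld operator. -/

import Mathlib

/-!
Off the anchor points, `f` is differentiable with gradient
`∑ i, (w i / ‖x - a i‖) • (x - a i) = c(x) • (x - T x)`, where `c(x) = ∑ i, w i / ‖x - a i‖ > 0`.
Since `f` is convex, `x̄` minimizes it over the convex set `C` iff the first-order condition
`0 ≤ ⟪∇f(x̄), x - x̄⟫` holds for all `x ∈ C`; dividing by `c(x̄)` turns this into the variational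
inequality for the Weiszfeld operator.
-/

open Finset
open scoped RealInnerProductSpace

/-- The Weiszfeld operator. -/
noncomputable def weiszfeldT {H : Type*} [NormedAddCommGroup H] [InnerProductSpace ℝ H]
    {m : ℕ} (w : Fin m → ℝ) (a : Fin m → H) (x : H) : H :=
  (∑ i, w i / ‖x - a i‖)⁻¹ • ∑ i, (w i / ‖x - a i‖) • a i

theorem convexOn_finset_sum {𝕜 E β ι : Type*} [Semiring 𝕜] [PartialOrder 𝕜] [AddCommMonoid E]
    [AddCommMonoid β] [PartialOrder β] [IsOrderedAddMonoid β] [SMul 𝕜 E] [Module 𝕜 β]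
    {s : Set E} (hs : Convex 𝕜 s) (t : Finset ι) {f : ι → E → β}
    (hf : ∀ i ∈ t, ConvexOn 𝕜 s (f i)) : ConvexOn 𝕜 s fun x => ∑ i ∈ t, f i x := by
  classical
  induction t using Finset.induction_on with
  | empty => simpa only [sum_empty] using convexOn_const (0 : β) hs
  | insert i t hi ih =>
    simp_rw [sum_insert hi]
    exact (hf i (mem_insert_self i t)).add (ih fun j hj => hf j (mem_insert_of_mem hj))

section FirstOrder

variable {E : Type*} [NormedAddCommGroup E] [NormedSpace ℝ E] {s : Set E} {f : E → ℝ}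
  {L : E →L[ℝ] ℝ} {x y : E}

theorem ConvexOn.le_sub_of_hasFDerivAt (hf : ConvexOn ℝ s f) (hx : x ∈ s) (hy : y ∈ s)
    (hL : HasFDerivAt f L x) : L (y - x) ≤ f y - f x := by
  have hline : ConvexOn ℝ (Set.Icc 0 1) (f ∘ AffineMap.lineMap (k := ℝ) x y) :=
    (hf.comp_affineMap _).subset (fun t ht => hf.1.lineMap_mem hx hy ht) (convex_Icc 0 1)
  have hderiv : HasDerivAt (f ∘ AffineMap.lineMap (k := ℝ) x y) (L (y - x)) 0 := by
    have hL' : HasFDerivAt f L (AffineMap.lineMap (k := ℝ) x y 0) := by simpa using hL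
    exact hL'.comp_hasDerivAt 0 AffineMap.hasDerivAt_lineMap
  simpa [slope_def_field] using
    hline.le_slope_of_hasDerivAt (by simp) (by simp) zero_lt_one hderiv

theorem ConvexOn.isMinOn_iff_forall_nonneg_of_hasFDerivAt (hf : ConvexOn ℝ s f) (hx : x ∈ s)
    (hL : HasFDerivAt f L x) : IsMinOn f s x ↔ ∀ y ∈ s, 0 ≤ L (y - x) := by
  refine ⟨fun hmin y hy => ?_, fun h y hy => ?_⟩
  · exact hmin.localize.hasFDerivWithinAt_nonneg hL.hasFDerivWithinAt
      (sub_mem_posTangentConeAt_of_segment_subset (hf.1.segment_subset hx hy))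
  · have hgrad := hf.le_sub_of_hasFDerivAt hx hy hL
    have hdir := h y hy
    change f x ≤ f y
    linarith

end FirstOrder

section WeightedDistances

variable {H : Type*} [NormedAddCommGroup H] [InnerProductSpace ℝ H]

theorem HasFDerivAt.norm {G : Type*} [NormedAddCommGroup G] [NormedSpace ℝ G] {f : G → H}
    {f' : G →L[ℝ] H} {x : G} (hf : HasFDerivAt f f' x) (h0 : f x ≠ 0) :
    HasFDerivAt (fun y => ‖f y‖) (‖f x‖⁻¹ • (innerSL ℝ (f x)).comp f' : G →L[ℝ] ℝ) x := by
  have h := hf.norm_sq.sqrt (by positivity)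
  simp only [Real.sqrt_sq (norm_nonneg _)] at h
  convert h using 1
  ext v
  simp only [smul_apply, ContinuousLinearMap.comp_apply, coe_innerSL_apply,
    smul_eq_mul, one_div, mul_inv_rev, nsmul_eq_mul, Nat.cast_ofNat]
  ring

theorem hasFDerivAt_norm_sub {x : H} (a : H) (hx : x ≠ a) :
    HasFDerivAt (fun y => ‖y - a‖) (‖x - a‖⁻¹ • innerSL ℝ (x - a) : H →L[ℝ] ℝ) x := by
  simpa using ((hasFDerivAt_id x).sub_const a).norm (sub_ne_zero.2 hx)

theorem hasFDerivAt_sum_mul_norm_sub {m : ℕ} (w : Fin m → ℝ) (a : Fin m → H) {x : H}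
    (hx : ∀ i, x ≠ a i) :
    HasFDerivAt (fun y => ∑ i, w i * ‖y - a i‖)
      (innerSL ℝ (∑ i, (w i / ‖x - a i‖) • (x - a i))) x := by
  refine (HasFDerivAt.fun_sum fun i _ => (hasFDerivAt_norm_sub (a i) (hx i)).const_mul (w i))
    |>.congr_fderiv ?_
  ext v
  simp [div_eq_mul_inv, mul_assoc]

theorem sum_smul_sub_eq_smul_sub_weiszfeldT {m : ℕ} (w : Fin m → ℝ) (a : Fin m → H) (x : H)
    (hc : ∑ i, w i / ‖x - a i‖ ≠ 0) :
    ∑ i, (w i / ‖x - a i‖) • (x - a i) = (∑ i, w i / ‖x - a i‖) • (x - weiszfeldT w a x) := by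
  rw [weiszfeldT, smul_sub, smul_inv_smul₀ hc, sum_smul]
  simp only [smul_sub, sum_sub_distrib]

end WeightedDistances

theorem isMinOn_iff_variational_inequality_general
    {H : Type*} [NormedAddCommGroup H] [InnerProductSpace ℝ H]
    {m : ℕ} (hm : 1 ≤ m) (a : Fin m → H) (w : Fin m → ℝ)
    (hw : ∀ i, 0 < w i)
    (C : Set H) (hCconv : Convex ℝ C)
    (xbar : H) (hxC : xbar ∈ C) (hxA : xbar ∉ Set.range a) :
    IsMinOn (fun x => ∑ i, w i * ‖x - a i‖) C xbar ↔
      ∀ x ∈ C, ⟪weiszfeldT w a xbar - xbar, x - xbar⟫ ≤ 0 := by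
  have hxa : ∀ i, xbar ≠ a i := fun i h => hxA ⟨i, h.symm⟩
  have hc : 0 < ∑ i, w i / ‖xbar - a i‖ := by
    have : Nonempty (Fin m) := Fin.pos_iff_nonempty.mp hm
    exact sum_pos (fun i _ => div_pos (hw i) (norm_pos_iff.2 (sub_ne_zero.2 (hxa i))))
      univ_nonempty
  have hconv : ConvexOn ℝ C fun x => ∑ i, w i * ‖x - a i‖ :=
    convexOn_finset_sum hCconv univ fun i _ => by
      simpa [dist_eq_norm] using (convexOn_dist (a i) hCconv).smul (hw i).le
  rw [hconv.isMinOn_iff_forall_nonneg_of_hasFDerivAt hxC (hasFDerivAt_sum_mul_norm_sub w a hxa)]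
  refine forall₂_congr fun x _ => ?_
  rw [innerSL_apply_apply, sum_smul_sub_eq_smul_sub_weiszfeldT w a xbar hc.ne',
    real_inner_smul_left, ← neg_sub, inner_neg_left, mul_nonneg_iff_of_pos_left hc, neg_nonneg]

theorem isMinOn_iff_variational_inequality
    {H : Type*} [NormedAddCommGroup H] [InnerProductSpace ℝ H] [CompleteSpace H]
    {m : ℕ} (hm : 1 ≤ m) (a : Fin m → H) (w : Fin m → ℝ)
    (hw : ∀ i, 0 < w i)
    (hcol : ¬ ∃ u v : H, ∀ i, ∃ t : ℝ, a i = u + t • v)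
    (C : Set H) (hCne : C.Nonempty) (hCclosed : IsClosed C) (hCconv : Convex ℝ C)
    (xbar : H) (hxC : xbar ∈ C) (hxA : xbar ∉ Set.range a) :
    IsMinOn (fun x => ∑ i, w i * ‖x - a i‖) C xbar ↔
      ∀ x ∈ C, ⟪weiszfeldT w a xbar - xbar, x - xbar⟫ ≤ 0 :=
  isMinOn_iff_variational_inequality_general hm a w hw C hCconv xbar hxC hxA
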